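/- Let G be a graph on n ≥ 4 nodes (n even) with planted bisection V1, V2, induced subgraphs G1 = G[V1], G2 = G[V2], and crossing bipartite graph G0. Assume that G1 and G2 each contain a d_in-regular spanning subgraph (on the same node set), for some d_in ∈ {1,…,n/2 − 1}, and that G0 is a subgraph of some d_out-regular bipartite graph with the same bipartition, for some d_out ∈ {0,…,n/2}. If d_in − d_out ≥ n/4, then the metric LP relaxation recovers the planted bisection (the cut vector x̄ is its unique optimal solution). -/

import Mathlib

noncomputable section
open scoped Classical

/-- `i` and `j` lie on the same side of the planted bisection
`V₁ = {0, …, n/2 - 1}`, `V₂ = {n/2, …, n-1}`. -/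
def sameSide (n : ℕ) (i j : Fin n) : Prop :=
  ((i : ℕ) < n / 2 ↔ (j : ℕ) < n / 2)

/-- The sum of `f i j` over all unordered pairs `{i, j}` with `i < j`. -/
def pairSum (n : ℕ) (f : Fin n → Fin n → ℝ) : ℝ :=
  ∑ i : Fin n, ∑ j : Fin n, if i < j then f i j else 0

/-- Feasibility for the metric LP relaxation (LP-P): symmetry of the indexing by
unordered pairs, the triangle inequalities, the perimeter inequalities, and the
equipartition equality constraint. -/
def LPfeasible (n : ℕ) (x : Fin n → Fin n → ℝ) : Prop :=
  (∀ i j, x i j = x j i) ∧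
  (∀ i j k : Fin n, i ≠ j → i ≠ k → j ≠ k → x i j ≤ x i k + x j k) ∧
  (∀ i j k : Fin n, i < j → j < k → x i j + x i k + x j k ≤ 2) ∧
  pairSum n x = (n : ℝ) ^ 2 / 4

/-- The objective function of (LP-P): `∑_{(i,j) ∈ E} x_{ij}`, each edge counted once. -/
def LPobj (n : ℕ) (G : SimpleGraph (Fin n)) (x : Fin n → Fin n → ℝ) : ℝ :=
  ∑ i : Fin n, ∑ j : Fin n, if i < j ∧ G.Adj i j then x i j else 0

/-- The cut vector of the bisection `(S, Sᶜ)`. -/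
def cutVecOf {n : ℕ} (S : Finset (Fin n)) : Fin n → Fin n → ℝ :=
  fun i j => if (i ∈ S ↔ j ∈ S) then 0 else 1

/-- The cut vector of the planted bisection `V₁ = {0, …, n/2 - 1}`, `V₂ = {n/2, …, n-1}`. -/
def cutVec (n : ℕ) : Fin n → Fin n → ℝ :=
  fun i j => if sameSide n i j then 0 else 1

/-- The LP relaxation (LP-P) for the graph `G` recovers the bisection with cut vector
`xb`: `xb` is feasible, and it is the unique optimal solution (any feasible point
with the same objective value agrees with `xb` on all off-diagonal entries). -/
def LPrecoversOf (n : ℕ) (G : SimpleGraph (Fin n)) (xb : Fin n → Fin n → ℝ) : Prop :=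
  LPfeasible n xb ∧
  ∀ x : Fin n → Fin n → ℝ, LPfeasible n x →
    LPobj n G xb ≤ LPobj n G x ∧
    (LPobj n G x = LPobj n G xb → ∀ i j : Fin n, i ≠ j → x i j = xb i j)

/-- The LP relaxation (LP-P) for `G` recovers the planted bisection
`V₁ = {0, …, n/2 - 1}`, `V₂ = {n/2, …, n-1}`. -/
def LPrecovers (n : ℕ) (G : SimpleGraph (Fin n)) : Prop :=
  LPrecoversOf n G (cutVec n)

/-!
The LP leaves the diagonal of `x` free; zeroing it turns a feasible `x` into a pseudometric `d`
with values in `[0, 1]` and total mass `∑ᵢ ∑ⱼ d i j = n² / 2`. Put `m = n / 2` and, for a node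
`i`, let `Z i` be the mass `d` puts on `i`'s own side and `Y i = ∑ (1 - d i j)` over the other
side; the mass constraint gives `∑ Y = ∑ Z`. Triangle inequalities through the `m` nodes of one
side give `m (1 - d i k) ≤ Y k + Z i` for crossing pairs and `m d i j ≤ Z i + Z j` for pairs on
one side. Summing the first over the edges of the `d_out`-regular bipartite graph, and the second
over the same-side pairs that are not edges of the `d_in`-regular subgraph, yields
`m (obj d - obj x̄) ≥ (2 d_in - 2 d_out - m + 2) ∑ Z ≥ 2 ∑ Z ≥ 0`. At equality `∑ Z = ∑ Y = 0`,
which forces `d = x̄`.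
-/

open Finset

structure IsUnitPseudometric {V : Type*} (d : V → V → ℝ) : Prop where
  self_eq_zero : ∀ i, d i i = 0
  symm : ∀ i j, d i j = d j i
  triangle : ∀ i j k, d i j ≤ d i k + d k j
  le_one : ∀ i j, d i j ≤ 1

lemma IsUnitPseudometric.nonneg {V : Type*} {d : V → V → ℝ} (hd : IsUnitPseudometric d)
    (i j : V) : 0 ≤ d i j := by
  linarith [hd.triangle i i j, hd.self_eq_zero i, hd.symm i j]

lemma sum_sum_add_eq_of_symm {V : Type*} [Fintype V] (N : V → Finset V)
    (hN : ∀ i j, j ∈ N i ↔ i ∈ N j) {c : ℝ} (hc : ∀ i, (#(N i) : ℝ) = c) (f : V → ℝ) :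
    ∑ i, ∑ j ∈ N i, (f i + f j) = 2 * c * ∑ i, f i := by
  have hswap : ∑ i, ∑ j ∈ N i, f j = ∑ j, ∑ i ∈ N j, f j :=
    sum_comm' fun i j => by simp [hN i j]
  simp only [sum_add_distrib, hswap, sum_const, nsmul_eq_mul, hc, ← mul_sum]
  ring

lemma SimpleGraph.isRegularOfDegree_of_ncard {V : Type*} [Fintype V] (G : SimpleGraph V)
    [DecidableRel G.Adj] {k : ℕ} (h : ∀ v, (G.neighborSet v).ncard = k) :
    G.IsRegularOfDegree k := fun v => by
  rw [← h v, ← G.card_neighborSet_eq_degree, ← Nat.card_eq_fintype_card, Nat.card_coe_set_eq]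

section Bisection

variable {V : Type*} [Fintype V] [DecidableEq V] {S : Finset V} {m : ℕ} {d : V → V → ℝ}

def side (S : Finset V) (i : V) : Finset V := {j | i ∈ S ↔ j ∈ S}

def cutMetric (S : Finset V) (i j : V) : ℝ := if j ∈ side S i then 0 else 1

def sideMass (S : Finset V) (d : V → V → ℝ) (i : V) : ℝ := ∑ j ∈ side S i, d i j

def crossDeficit (S : Finset V) (d : V → V → ℝ) (i : V) : ℝ := ∑ j ∈ (side S i)ᶜ, (1 - d i j)

@[simp] lemma mem_side {i j : V} : j ∈ side S i ↔ (i ∈ S ↔ j ∈ S) := by simp [side]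

lemma self_mem_side (i : V) : i ∈ side S i := by simp

lemma side_eq_of_mem {i j : V} (h : j ∈ side S i) : side S j = side S i := by
  ext k; simp only [mem_side] at *; tauto

lemma compl_side_eq_of_notMem {i j : V} (h : j ∉ side S i) : (side S j)ᶜ = side S i := by
  ext k; simp only [mem_compl, mem_side] at *; tauto

lemma card_side (hS : #S = m) (hSc : #Sᶜ = m) (i : V) : #(side S i) = m := by
  by_cases hi : i ∈ S
  · rw [← hS]; congr 1; ext j; simp [hi]
  · rw [← hSc]; congr 1; ext j; simp [hi]

lemma card_compl_side (hS : #S = m) (hSc : #Sᶜ = m) (i : V) : #(side S i)ᶜ = m := by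
  have h1 := card_add_card_compl (side S i)
  have h2 := card_add_card_compl S
  rw [card_side hS hSc] at h1
  omega

lemma isUnitPseudometric_cutMetric : IsUnitPseudometric (cutMetric S) where
  self_eq_zero i := by simp [cutMetric]
  symm i j := by simp only [cutMetric, mem_side, Iff.comm]
  triangle i j k := by
    simp only [cutMetric, mem_side]
    by_cases hi : i ∈ S <;> by_cases hj : j ∈ S <;> by_cases hk : k ∈ S <;> simp [hi, hj, hk]
  le_one i j := by simp only [cutMetric]; split_ifs <;> norm_num

lemma cutMetric_perimeter (i j k : V) :
    cutMetric S i j + cutMetric S i k + cutMetric S j k ≤ 2 := by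
  simp only [cutMetric, mem_side]
  by_cases hi : i ∈ S <;> by_cases hj : j ∈ S <;> by_cases hk : k ∈ S <;> norm_num [hi, hj, hk]

lemma sum_sum_cutMetric (hS : #S = m) (hSc : #Sᶜ = m) :
    ∑ i, ∑ j, cutMetric S i j = 2 * m * m := by
  have hrow : ∀ i, ∑ j, cutMetric S i j = m := fun i => by
    simp [cutMetric, sum_ite, ← card_compl_side hS hSc i, filter_not, side, compl_eq_univ_sdiff]
  have hcard : Fintype.card V = 2 * m := by rw [← card_add_card_compl S, hS, hSc]; ring
  simp [hrow, hcard]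

lemma sideMass_nonneg (hd : IsUnitPseudometric d) (i : V) : 0 ≤ sideMass S d i :=
  sum_nonneg fun j _ => hd.nonneg i j

lemma crossDeficit_nonneg (hd : IsUnitPseudometric d) (i : V) : 0 ≤ crossDeficit S d i :=
  sum_nonneg fun j _ => sub_nonneg.mpr (hd.le_one i j)

lemma sum_crossDeficit_eq_sum_sideMass (hS : #S = m) (hSc : #Sᶜ = m)
    (htotal : ∑ i, ∑ j, d i j = 2 * m * m) :
    ∑ i, crossDeficit S d i = ∑ i, sideMass S d i := by
  have hcard : Fintype.card V = 2 * m := by rw [← card_add_card_compl S, hS, hSc]; ring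
  have hY : ∑ i, crossDeficit S d i = 2 * m * m - ∑ i, ∑ j ∈ (side S i)ᶜ, d i j := by
    simp [crossDeficit, sum_sub_distrib, card_compl_side hS hSc, hcard]
  have hZ : ∑ i, sideMass S d i + ∑ i, ∑ j ∈ (side S i)ᶜ, d i j = 2 * m * m := by
    rw [← htotal, ← sum_add_distrib]
    exact sum_congr rfl fun i _ => sum_add_sum_compl _ _
  linarith

lemma mul_one_sub_le_crossDeficit_add_sideMass (hd : IsUnitPseudometric d) (hS : #S = m)
    (hSc : #Sᶜ = m) {i k : V} (hik : k ∉ side S i) :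
    m * (1 - d i k) ≤ crossDeficit S d k + sideMass S d i :=
  calc m * (1 - d i k) = ∑ j ∈ side S i, (1 - d i k) := by simp [card_side hS hSc, mul_sub]
    _ ≤ ∑ j ∈ side S i, ((1 - d k j) + d i j) :=
      sum_le_sum fun j _ => by linarith [hd.triangle k j i, hd.symm k i, hd.symm j i]
    _ = crossDeficit S d k + sideMass S d i := by
      rw [sum_add_distrib, crossDeficit, compl_side_eq_of_notMem hik, sideMass]

lemma mul_le_sideMass_add_sideMass (hd : IsUnitPseudometric d) (hS : #S = m)
    (hSc : #Sᶜ = m) {i j : V} (hij : j ∈ side S i) :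
    m * d i j ≤ sideMass S d i + sideMass S d j :=
  calc m * d i j = ∑ u ∈ side S i, d i j := by simp [card_side hS hSc]
    _ ≤ ∑ u ∈ side S i, (d i u + d j u) :=
      sum_le_sum fun u _ => by linarith [hd.triangle i j u, hd.symm u j]
    _ = sideMass S d i + sideMass S d j := by
      rw [sum_add_distrib, sideMass, sideMass, side_eq_of_mem hij]

lemma mul_sum_crossDeficit_le (hd : IsUnitPseudometric d) (hS : #S = m) (hSc : #Sᶜ = m)
    (htotal : ∑ i, ∑ j, d i j = 2 * m * m) (G K : SimpleGraph V) [DecidableRel G.Adj]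
    [DecidableRel K.Adj] {e : ℕ} (hK : ∀ i j, K.Adj i j → j ∉ side S i)
    (hGK : ∀ i j, j ∉ side S i → G.Adj i j → K.Adj i j) (hKreg : K.IsRegularOfDegree e) :
    m * ∑ i, ∑ j ∈ G.neighborFinset i with j ∉ side S i, (1 - d i j)
      ≤ 2 * e * ∑ i, sideMass S d i := by
  set W : V → ℝ := fun i => crossDeficit S d i + sideMass S d i
  have hcount := sum_sum_add_eq_of_symm (fun i => K.neighborFinset i)
    (fun i j => by simp [K.adj_comm]) (c := e)
    (fun i => by rw [K.card_neighborFinset_eq_degree, hKreg i]) W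
  have hedge : ∀ i, ∀ j ∈ K.neighborFinset i, 2 * (m * (1 - d i j)) ≤ W i + W j := by
    intro i j hj
    have hij := hK i j ((K.mem_neighborFinset i j).mp hj)
    have hji : i ∉ side S j := fun h => hij (by simp only [mem_side] at h ⊢; tauto)
    have h1 := mul_one_sub_le_crossDeficit_add_sideMass hd hS hSc hij
    have h2 := mul_one_sub_le_crossDeficit_add_sideMass hd hS hSc hji
    rw [hd.symm j i] at h2
    simp only [W]
    linarith
  have hsub : m * ∑ i, ∑ j ∈ G.neighborFinset i with j ∉ side S i, (1 - d i j)
      ≤ m * ∑ i, ∑ j ∈ K.neighborFinset i, (1 - d i j) := by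
    refine mul_le_mul_of_nonneg_left (sum_le_sum fun i _ => ?_) m.cast_nonneg
    refine sum_le_sum_of_subset_of_nonneg (fun j hj => ?_)
      fun j _ _ => sub_nonneg.mpr (hd.le_one i j)
    simp only [mem_filter, SimpleGraph.mem_neighborFinset] at hj ⊢
    exact hGK i j hj.2 hj.1
  have hK2 : 2 * (m * ∑ i, ∑ j ∈ K.neighborFinset i, (1 - d i j)) ≤ 2 * e * ∑ i, W i := by
    rw [← hcount, mul_sum, mul_sum]
    gcongr with i
    rw [mul_sum, mul_sum]
    exact sum_le_sum (hedge i)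
  have hbal := sum_crossDeficit_eq_sum_sideMass hS hSc htotal
  simp only [W, sum_add_distrib, hbal] at hK2
  linarith

lemma mul_sum_sideMass_le_mul_sum_adj (hd : IsUnitPseudometric d) (hS : #S = m) (hSc : #Sᶜ = m)
    (H : SimpleGraph V) [DecidableRel H.Adj] {k : ℕ} (hH : ∀ i j, H.Adj i j → j ∈ side S i)
    (hHreg : H.IsRegularOfDegree k) :
    (2 * k + 2 - m) * ∑ i, sideMass S d i ≤ m * ∑ i, ∑ j ∈ H.neighborFinset i, d i j := by
  set R : V → Finset V := fun i => (side S i).erase i \ H.neighborFinset i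
  have hsub : ∀ i, H.neighborFinset i ⊆ (side S i).erase i := fun i j hj => by
    rw [SimpleGraph.mem_neighborFinset] at hj
    exact mem_erase.mpr ⟨hj.ne', hH i j hj⟩
  have hsplit : ∀ i, sideMass S d i = ∑ j ∈ H.neighborFinset i, d i j + ∑ j ∈ R i, d i j := by
    intro i
    rw [sideMass, ← add_sum_erase _ _ (self_mem_side i), ← sum_sdiff (hsub i), hd.self_eq_zero]
    ring
  have hcard : ∀ i, (#(R i) : ℝ) = m - 1 - k := by
    intro i
    have h1 : (#(R i) : ℝ) + k = #((side S i).erase i) := by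
      rw [← hHreg i, ← H.card_neighborFinset_eq_degree]
      exact_mod_cast card_sdiff_add_card_eq_card (hsub i)
    have h2 : (#((side S i).erase i) : ℝ) + 1 = m := by
      exact_mod_cast (card_erase_add_one (self_mem_side i)).trans (card_side hS hSc i)
    linarith
  have hsymm : ∀ i j, j ∈ R i ↔ i ∈ R j := by
    intro i j
    simp only [R, mem_sdiff, mem_erase, mem_side, SimpleGraph.mem_neighborFinset, H.adj_comm]
    tauto
  have hcount := sum_sum_add_eq_of_symm R hsymm hcard (sideMass S d)
  have hR : m * ∑ i, ∑ j ∈ R i, d i j ≤ ∑ i, ∑ j ∈ R i, (sideMass S d i + sideMass S d j) := by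
    rw [mul_sum]
    refine sum_le_sum fun i _ => ?_
    rw [mul_sum]
    refine sum_le_sum fun j hj => mul_le_sideMass_add_sideMass hd hS hSc ?_
    exact (mem_erase.mp (mem_sdiff.mp hj).1).2
  have hZ : ∑ i, sideMass S d i
      = ∑ i, ∑ j ∈ H.neighborFinset i, d i j + ∑ i, ∑ j ∈ R i, d i j := by
    rw [← sum_add_distrib]
    exact sum_congr rfl fun i _ => hsplit i
  rw [hcount] at hR
  linear_combination hR + (m : ℝ) * hZ

theorem two_mul_sum_sideMass_le_mul_sum_sub_cutMetric (hd : IsUnitPseudometric d) (hS : #S = m)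
    (hSc : #Sᶜ = m) (htotal : ∑ i, ∑ j, d i j = 2 * m * m) (G H K : SimpleGraph V)
    [DecidableRel G.Adj] [DecidableRel H.Adj] [DecidableRel K.Adj] {din dout : ℕ} (hHG : H ≤ G)
    (hH : ∀ i j, H.Adj i j → j ∈ side S i) (hHreg : H.IsRegularOfDegree din)
    (hK : ∀ i j, K.Adj i j → j ∉ side S i) (hGK : ∀ i j, j ∉ side S i → G.Adj i j → K.Adj i j)
    (hKreg : K.IsRegularOfDegree dout) (hgap : (m : ℝ) ≤ 2 * din - 2 * dout) :
    2 * ∑ i, sideMass S d i ≤ m * ∑ i, ∑ j ∈ G.neighborFinset i, (d i j - cutMetric S i j) := by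
  have hsplit : ∀ i, ∑ j ∈ G.neighborFinset i, (d i j - cutMetric S i j)
      = ∑ j ∈ G.neighborFinset i with j ∈ side S i, d i j
        - ∑ j ∈ G.neighborFinset i with j ∉ side S i, (1 - d i j) := by
    intro i
    rw [← sum_filter_add_sum_filter_not _ (· ∈ side S i), sub_eq_add_neg, ← sum_neg_distrib]
    congr 1 <;> refine sum_congr rfl fun j hj => ?_ <;> simp_all [cutMetric]
  have hin : ∑ i, ∑ j ∈ H.neighborFinset i, d i j
      ≤ ∑ i, ∑ j ∈ G.neighborFinset i with j ∈ side S i, d i j := by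
    refine sum_le_sum fun i _ => sum_le_sum_of_subset_of_nonneg (fun j hj => ?_)
      fun j _ _ => hd.nonneg i j
    rw [SimpleGraph.mem_neighborFinset] at hj
    exact mem_filter.mpr ⟨(G.mem_neighborFinset i j).mpr (hHG hj), hH i j hj⟩
  have hcross := mul_sum_crossDeficit_le hd hS hSc htotal G K hK hGK hKreg
  have hwithin := mul_sum_sideMass_le_mul_sum_adj hd hS hSc H hH hHreg
  have hZ : 0 ≤ ∑ i, sideMass S d i := sum_nonneg fun i _ => sideMass_nonneg hd i
  rw [sum_congr rfl fun i _ => hsplit i, sum_sub_distrib, mul_sub]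
  nlinarith [mul_le_mul_of_nonneg_left hin m.cast_nonneg, mul_nonneg (sub_nonneg.mpr hgap) hZ]

lemma eq_cutMetric_of_sum_sideMass_eq_zero (hd : IsUnitPseudometric d) (hS : #S = m)
    (hSc : #Sᶜ = m) (htotal : ∑ i, ∑ j, d i j = 2 * m * m) (hZ : ∑ i, sideMass S d i = 0) :
    d = cutMetric S := by
  have hY : ∑ i, crossDeficit S d i = 0 := (sum_crossDeficit_eq_sum_sideMass hS hSc htotal).trans hZ
  funext i j
  by_cases hj : j ∈ side S i
  · have hZi := (sum_eq_zero_iff_of_nonneg fun i _ => sideMass_nonneg hd i).mp hZ i (mem_univ i)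
    have := (sum_eq_zero_iff_of_nonneg fun j _ => hd.nonneg i j).mp hZi j hj
    simp [cutMetric, hj, this]
  · have hYi := (sum_eq_zero_iff_of_nonneg fun i _ => crossDeficit_nonneg hd i).mp hY i (mem_univ i)
    have := (sum_eq_zero_iff_of_nonneg fun j _ => sub_nonneg.mpr (hd.le_one i j)).mp hYi j
      (mem_compl.mpr hj)
    simp only [cutMetric, hj, if_false]
    linarith

theorem cutMetric_unique_minimizer (hd : IsUnitPseudometric d) (hm : 0 < m) (hS : #S = m)
    (hSc : #Sᶜ = m) (htotal : ∑ i, ∑ j, d i j = 2 * m * m) (G H K : SimpleGraph V)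
    [DecidableRel G.Adj] [DecidableRel H.Adj] [DecidableRel K.Adj] {din dout : ℕ} (hHG : H ≤ G)
    (hH : ∀ i j, H.Adj i j → j ∈ side S i) (hHreg : H.IsRegularOfDegree din)
    (hK : ∀ i j, K.Adj i j → j ∉ side S i) (hGK : ∀ i j, j ∉ side S i → G.Adj i j → K.Adj i j)
    (hKreg : K.IsRegularOfDegree dout) (hgap : (m : ℝ) ≤ 2 * din - 2 * dout) :
    ∑ i, ∑ j ∈ G.neighborFinset i, cutMetric S i j ≤ ∑ i, ∑ j ∈ G.neighborFinset i, d i j ∧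
      (∑ i, ∑ j ∈ G.neighborFinset i, d i j = ∑ i, ∑ j ∈ G.neighborFinset i, cutMetric S i j →
        d = cutMetric S) := by
  have hmain := two_mul_sum_sideMass_le_mul_sum_sub_cutMetric hd hS hSc htotal G H K hHG hH hHreg
    hK hGK hKreg hgap
  have hZ : 0 ≤ ∑ i, sideMass S d i := sum_nonneg fun i _ => sideMass_nonneg hd i
  have hm' : (0 : ℝ) < m := by exact_mod_cast hm
  simp only [sum_sub_distrib] at hmain
  refine ⟨?_, fun heq => eq_cutMetric_of_sum_sideMass_eq_zero hd hS hSc htotal ?_⟩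
  · nlinarith
  · rw [heq, sub_self, mul_zero] at hmain
    linarith

end Bisection

section LP

variable {n : ℕ} {x : Fin n → Fin n → ℝ}

lemma two_mul_pairSum {f : Fin n → Fin n → ℝ} (hsymm : ∀ i j, f i j = f j i)
    (hdiag : ∀ i, f i i = 0) : 2 * pairSum n f = ∑ i, ∑ j, f i j := by
  have hlower : ∑ i, ∑ j, (if j < i then f i j else 0) = pairSum n f := by
    rw [pairSum, sum_comm]
    exact sum_congr rfl fun i _ => sum_congr rfl fun j _ => by rw [hsymm]
  have hsplit : ∀ i j, (if i < j then f i j else 0) + (if j < i then f i j else 0) = f i j := by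
    intro i j
    rcases lt_trichotomy i j with h | rfl | h
    · simp [h, h.not_gt]
    · simp [hdiag]
    · simp [h, h.not_gt]
  calc 2 * pairSum n f = pairSum n f + ∑ i, ∑ j, (if j < i then f i j else 0) := by
        rw [hlower]; ring
    _ = ∑ i, ∑ j, f i j := by
        rw [pairSum, ← sum_add_distrib]
        exact sum_congr rfl fun i _ => by
          rw [← sum_add_distrib]; exact sum_congr rfl fun j _ => hsplit i j

lemma two_mul_LPobj (G : SimpleGraph (Fin n)) {f : Fin n → Fin n → ℝ}
    (hsymm : ∀ i j, f i j = f j i) :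
    2 * LPobj n G f = ∑ i, ∑ j ∈ G.neighborFinset i, f i j := by
  have h : LPobj n G f = pairSum n fun i j => if G.Adj i j then f i j else 0 := by
    simp only [LPobj, pairSum, ite_and]
  rw [h, two_mul_pairSum (fun i j => by simp [G.adj_comm, hsymm i j]) (fun i => by simp)]
  simp [SimpleGraph.neighborFinset_eq_filter, sum_filter]

lemma LPfeasible.perimeter (hx : LPfeasible n x) {i j k : Fin n} (hij : i ≠ j) (hik : i ≠ k)
    (hjk : j ≠ k) : x i j + x i k + x j k ≤ 2 := by
  obtain ⟨hsymm, -, hper, -⟩ := hx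
  rcases hij.lt_or_gt with h1 | h1 <;> rcases hik.lt_or_gt with h2 | h2 <;>
    rcases hjk.lt_or_gt with h3 | h3
  all_goals first
    | omega
    | linarith [hper i j k h1 h3]
    | linarith [hper i k j h2 h3, hsymm k j]
    | linarith [hper k i j h2 h1, hsymm k i, hsymm k j]
    | linarith [hper j i k h1 h2, hsymm j i]
    | linarith [hper j k i h3 h2, hsymm j i, hsymm k i]
    | linarith [hper k j i h3 h1, hsymm k j, hsymm k i, hsymm j i]

lemma LPfeasible.nonneg (hx : LPfeasible n x) (hn : 3 ≤ n) {i j : Fin n} (hij : i ≠ j) :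
    0 ≤ x i j := by
  obtain ⟨k, hki, hkj⟩ := Fin.exists_ne_and_ne_of_two_lt i j hn
  obtain ⟨hsymm, htri, -, -⟩ := hx
  linarith [htri i k j hki.symm hij hkj, htri j k i hkj.symm hij.symm hki, hsymm j i, hsymm k i,
    hsymm k j]

lemma LPfeasible.le_one (hx : LPfeasible n x) (hn : 3 ≤ n) {i j : Fin n} (hij : i ≠ j) :
    x i j ≤ 1 := by
  obtain ⟨k, hki, hkj⟩ := Fin.exists_ne_and_ne_of_two_lt i j hn
  linarith [hx.2.1 i j k hij hki.symm hkj.symm, hx.perimeter hij hki.symm hkj.symm]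

def withZeroDiag (x : Fin n → Fin n → ℝ) (i j : Fin n) : ℝ := if i = j then 0 else x i j

lemma withZeroDiag_symm (hsymm : ∀ i j, x i j = x j i) (i j : Fin n) :
    withZeroDiag x i j = withZeroDiag x j i := by
  by_cases h : i = j
  · subst h; rfl
  · simp [withZeroDiag, h, Ne.symm h, hsymm i j]

lemma LPfeasible.isUnitPseudometric (hx : LPfeasible n x) (hn : 3 ≤ n) :
    IsUnitPseudometric (withZeroDiag x) where
  self_eq_zero i := if_pos rfl
  symm := withZeroDiag_symm hx.1
  triangle i j k := by
    have h0 : ∀ a b, 0 ≤ withZeroDiag x a b := fun a b => by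
      unfold withZeroDiag; split_ifs with h
      exacts [le_rfl, hx.nonneg hn h]
    rcases eq_or_ne i j with rfl | hij
    · simpa [withZeroDiag] using add_nonneg (h0 i k) (h0 k i)
    rcases eq_or_ne i k with rfl | hik
    · simp [withZeroDiag]
    rcases eq_or_ne k j with rfl | hkj
    · simp [withZeroDiag]
    simp only [withZeroDiag, hij, hik, hkj, if_false]
    linarith [hx.2.1 i j k hij hik hkj.symm, hx.1 j k]
  le_one i j := by
    unfold withZeroDiag; split_ifs with h
    exacts [zero_le_one, hx.le_one hn h]

lemma LPfeasible.sum_sum_withZeroDiag (hx : LPfeasible n x) :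
    ∑ i, ∑ j, withZeroDiag x i j = (n : ℝ) ^ 2 / 2 := by
  have hpair : pairSum n (withZeroDiag x) = pairSum n x :=
    sum_congr rfl fun i _ => sum_congr rfl fun j _ => by
      by_cases h : i < j
      · simp [withZeroDiag, h, h.ne]
      · simp [h]
  rw [← two_mul_pairSum (withZeroDiag_symm hx.1) (fun i => if_pos rfl), hpair, hx.2.2.2]
  ring

lemma LPfeasible.two_mul_LPobj_eq_withZeroDiag (hx : LPfeasible n x) (G : SimpleGraph (Fin n)) :
    2 * LPobj n G x = ∑ i, ∑ j ∈ G.neighborFinset i, withZeroDiag x i j := by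
  rw [two_mul_LPobj G hx.1]
  refine sum_congr rfl fun i _ => sum_congr rfl fun j hj => ?_
  rw [withZeroDiag, if_neg ((G.mem_neighborFinset i j).mp hj).ne]

lemma LPfeasible_cutMetric {S : Finset (Fin n)} {m : ℕ} (hS : #S = m) (hSc : #Sᶜ = m) :
    LPfeasible n (cutMetric S) := by
  have hc : IsUnitPseudometric (cutMetric S) := isUnitPseudometric_cutMetric
  have hn : (n : ℝ) = 2 * m := by
    have := card_add_card_compl S
    rw [hS, hSc, Fintype.card_fin] at this
    rw [← this]; push_cast; ring
  refine ⟨hc.symm, fun i j k _ _ _ => (hc.triangle i j k).trans_eq (by rw [hc.symm k j]),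
    fun i j k _ _ => cutMetric_perimeter i j k, ?_⟩
  have := two_mul_pairSum hc.symm hc.self_eq_zero
  rw [sum_sum_cutMetric hS hSc] at this
  rw [hn]
  linarith

def lowerHalf (n : ℕ) : Finset (Fin n) := {i | (i : ℕ) < n / 2}

lemma sameSide_iff_mem_side {i j : Fin n} : sameSide n i j ↔ j ∈ side (lowerHalf n) i := by
  simp [sameSide, lowerHalf]

lemma cutVec_eq_cutMetric : cutVec n = cutMetric (lowerHalf n) := by
  funext i j
  simp [cutVec, cutMetric, sameSide_iff_mem_side]

lemma card_lowerHalf : #(lowerHalf n) = n / 2 := by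
  rw [lowerHalf, Fin.card_filter_val_lt]
  omega

lemma card_compl_lowerHalf (hn : Even n) : #(lowerHalf n)ᶜ = n / 2 := by
  obtain ⟨m, rfl⟩ := hn
  rw [card_compl, Fintype.card_fin, card_lowerHalf]
  omega

end LP

theorem lp_recovery_general (n : ℕ) (hn : Even n) (hn4 : 4 ≤ n)
    (G : SimpleGraph (Fin n)) (din dout : ℕ)
    (hH : ∃ H : SimpleGraph (Fin n), H ≤ G ∧
      (∀ i j : Fin n, H.Adj i j → sameSide n i j) ∧
      (∀ v : Fin n, (H.neighborSet v).ncard = din))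
    (hK : ∃ K : SimpleGraph (Fin n),
      (∀ i j : Fin n, K.Adj i j → ¬ sameSide n i j) ∧
      (∀ i j : Fin n, ¬ sameSide n i j → G.Adj i j → K.Adj i j) ∧
      (∀ v : Fin n, (K.neighborSet v).ncard = dout))
    (h : (din : ℝ) - (dout : ℝ) ≥ (n : ℝ) / 4) :
    LPrecovers n G := by
  obtain ⟨H, hHG, hHside, hHdeg⟩ := hH
  obtain ⟨K, hKside, hGK, hKdeg⟩ := hK
  simp only [sameSide_iff_mem_side] at hHside hKside hGK
  have hhalf : (n : ℝ) = 2 * (n / 2 : ℕ) := by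
    obtain ⟨m, rfl⟩ := hn
    push_cast [show (m + m) / 2 = m by omega]
    ring
  have htotal (x : Fin n → Fin n → ℝ) (hx : LPfeasible n x) :
      ∑ i, ∑ j, withZeroDiag x i j = 2 * (n / 2 : ℕ) * (n / 2 : ℕ) := by
    rw [hx.sum_sum_withZeroDiag, hhalf]; ring
  refine ⟨cutVec_eq_cutMetric (n := n) ▸ LPfeasible_cutMetric card_lowerHalf
    (card_compl_lowerHalf hn), fun x hx => ?_⟩
  obtain ⟨hle, huniq⟩ := cutMetric_unique_minimizer (hx.isUnitPseudometric (by omega))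
    (by omega) card_lowerHalf (card_compl_lowerHalf hn) (htotal x hx) G H K hHG hHside
    (H.isRegularOfDegree_of_ncard hHdeg) hKside hGK (K.isRegularOfDegree_of_ncard hKdeg)
    (by linarith)
  have hobj := hx.two_mul_LPobj_eq_withZeroDiag G
  have hcut : 2 * LPobj n G (cutVec n)
      = ∑ i, ∑ j ∈ G.neighborFinset i, cutMetric (lowerHalf n) i j := by
    rw [cutVec_eq_cutMetric, two_mul_LPobj G isUnitPseudometric_cutMetric.symm]
  refine ⟨by linarith, fun heq i j hij => ?_⟩
  rw [cutVec_eq_cutMetric, ← congrFun₂ (huniq (by linarith)) i j, withZeroDiag, if_neg hij]
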